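/- arXiv:1205.4204 — 3 statements merged into one kernel-verified Lean document; each statement's English description precedes it below -/
import Mathlib

section
/- Let Σ be a fan in Q^k all of whose maximal cones are k-dimensional, and suppose the support |Σ| (the union of all cones of Σ) is a convex set. Let τ ∈ Σ be a cone whose intersection with the topological interior of |Σ| is nonempty. Then τ equals the intersection of all k-dimensional cones σ ∈ Σ with τ ⪯ σ (τ a face of σ). -/
/-- A convex cone in `ℚ^k`, modeled as a set containing `0`, closed under
addition and multiplication by nonnegative rationals. -/
def IsCone {k : ℕ} (σ : Set (Fin k → ℚ)) : Prop :=
  (0 : Fin k → ℚ) ∈ σ ∧ (∀ x ∈ σ, ∀ y ∈ σ, x + y ∈ σ) ∧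
    ∀ c : ℚ, 0 ≤ c → ∀ x ∈ σ, c • x ∈ σ

/-- `τ` is a face of `σ`: `τ ⊆ σ` and whenever a sum of two elements of `σ`
lies in `τ`, both summands lie in `τ`. -/
def IsFaceOf {k : ℕ} (τ σ : Set (Fin k → ℚ)) : Prop :=
  τ ⊆ σ ∧ ∀ x ∈ σ, ∀ y ∈ σ, x + y ∈ τ → x ∈ τ ∧ y ∈ τ

/-- The cone generated by a set: all finite nonnegative combinations. -/
def genCone {k : ℕ} (s : Set (Fin k → ℚ)) : Set (Fin k → ℚ) :=
  {x | ∃ (t : Finset (Fin k → ℚ)) (c : (Fin k → ℚ) → ℚ),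
    ↑t ⊆ s ∧ (∀ v, 0 ≤ c v) ∧ x = ∑ v ∈ t, c v • v}

/-- A polyhedral cone is a cone generated by finitely many vectors. -/
def IsPolyhedral {k : ℕ} (σ : Set (Fin k → ℚ)) : Prop :=
  ∃ s : Finset (Fin k → ℚ), σ = genCone ↑s

/-- The dimension of a cone: the dimension of its linear span. -/
noncomputable def coneDim {k : ℕ} (σ : Set (Fin k → ℚ)) : ℕ :=
  Module.finrank ℚ (Submodule.span ℚ σ)

/-- A fan in `ℚ^k`: a finite collection of convex polyhedral cones, closed
under taking faces, such that the intersection of any two of its cones is a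
face of each. -/
structure IsFan {k : ℕ} (F : Set (Set (Fin k → ℚ))) : Prop where
  finite : F.Finite
  cone : ∀ σ ∈ F, IsCone σ ∧ IsPolyhedral σ
  faces : ∀ σ ∈ F, ∀ τ, IsCone τ → IsFaceOf τ σ → τ ∈ F
  inter : ∀ σ ∈ F, ∀ σ' ∈ F, IsFaceOf (σ ∩ σ') σ ∧ IsFaceOf (σ ∩ σ') σ'

/-!
Choose a point `x` of `τ` that lies in the relative interior of `τ` and in the interior of the
support. Given `z` in every `k`-dimensional cone having `τ` as a face, the points `x + t • (x - z)`
stay in the support for small `t > 0`, so arbitrarily small such `t` land in one cone `σ`;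
polyhedral cones are closed (conic Carathéodory reduces them to finitely many simplicial cones,
which are linear images of an orthant), hence `x ∈ σ`. A maximal cone `m ⊇ σ` then meets the
relative interior of `τ`; as `m ∩ τ` is a face of `τ`, this forces `τ ⊆ m`, so `τ` is a face of the
`k`-dimensional cone `m` and `z ∈ m`. Finally `(x + t • (x - z)) + t • z = (1 + t) • x ∈ τ` and
the face property put `z` in `τ`.
-/

theorem LinearMap.isClosed_image_of_injective {K ι κ : Type*} [Field K] [TopologicalSpace K]
    [IsTopologicalRing K] [T2Space K] [Fintype ι] [Finite κ] (f : (ι → K) →ₗ[K] (κ → K))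
    (hf : Function.Injective f) {C : Set (ι → K)} (hC : IsClosed C) : IsClosed (f '' C) := by
  obtain ⟨g, hg⟩ := f.exists_leftInverse_of_injective (LinearMap.ker_eq_bot.mpr hf)
  have hgf : ∀ c, g (f c) = c := LinearMap.congr_fun hg
  have himage : f '' C = {y | g y ∈ C} ∩ {y | f (g y) = y} := by
    ext y
    constructor
    · rintro ⟨c, hc, rfl⟩
      exact ⟨by simpa [hgf] using hc, by simp [hgf]⟩
    · rintro ⟨hy, hfy⟩
      exact ⟨g y, hy, hfy⟩
  rw [himage]
  exact (hC.preimage g.continuous_on_pi).inter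
    (isClosed_eq (f.continuous_on_pi.comp g.continuous_on_pi) continuous_id)

theorem tendsto_add_smul_nhdsGT {E : Type*} [TopologicalSpace E] [AddCommGroup E] [Module ℚ E]
    [ContinuousAdd E] [ContinuousSMul ℚ E] (x w : E) :
    Filter.Tendsto (fun t : ℚ => x + t • w) (nhdsWithin 0 (Set.Ioi 0)) (nhds x) := by
  refine tendsto_nhdsWithin_of_tendsto_nhds ?_
  have hcont : Continuous fun t : ℚ => x + t • w := by fun_prop
  simpa using hcont.tendsto 0

theorem Set.Finite.exists_maximal_mem_superset {α : Type*} {F : Set (Set α)} (hF : F.Finite)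
    {σ : Set α} (hσ : σ ∈ F) :
    ∃ m ∈ F, σ ⊆ m ∧ ∀ σ' ∈ F, m ⊆ σ' → σ' = m := by
  obtain ⟨m, hm, hmax⟩ := Set.Finite.exists_maximalFor id {σ' ∈ F | σ ⊆ σ'}
    (hF.subset (Set.sep_subset _ _)) ⟨σ, hσ, subset_rfl⟩
  exact ⟨m, hm.1, hm.2, fun σ' hσ' hsub =>
    Set.Subset.antisymm (hmax ⟨hσ', hm.2.trans hsub⟩ hsub) hsub⟩

theorem exists_mem_add_smul_mem_of_mem_interior_sUnion {E : Type*} [TopologicalSpace E]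
    [AddCommGroup E] [Module ℚ E] [ContinuousAdd E] [ContinuousSMul ℚ E] {F : Set (Set E)}
    (hF : F.Finite) (hclosed : ∀ σ ∈ F, IsClosed σ) {x : E} (hx : x ∈ interior (⋃₀ F)) (w : E) :
    ∃ σ ∈ F, x ∈ σ ∧ ∃ t : ℚ, 0 < t ∧ x + t • w ∈ σ := by
  have hline := tendsto_add_smul_nhdsGT x w
  have hfreq : ∃ᶠ t in nhdsWithin (0 : ℚ) (Set.Ioi 0), ∃ σ ∈ F, x + t • w ∈ σ :=
    (hline.eventually (mem_interior_iff_mem_nhds.mp hx)).frequently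
  obtain ⟨σ, hσF, hσ⟩ := (hF.frequently_exists).mp hfreq
  obtain ⟨t, htσ, ht⟩ := (hσ.and_eventually self_mem_nhdsWithin).exists
  exact ⟨σ, hσF, (hclosed σ hσF).mem_of_frequently_of_tendsto hσ hline, t, ht, htσ⟩

section Cone

variable {k : ℕ}

theorem genCone_mono {s s' : Set (Fin k → ℚ)} (h : s ⊆ s') : genCone s ⊆ genCone s' := by
  rintro x ⟨t, c, hts, hc, rfl⟩
  exact ⟨t, c, hts.trans h, hc, rfl⟩

theorem mem_genCone_finset_iff {s : Finset (Fin k → ℚ)} {x : Fin k → ℚ} :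
    x ∈ genCone (s : Set (Fin k → ℚ)) ↔
      ∃ c : (Fin k → ℚ) → ℚ, (∀ v ∈ s, 0 ≤ c v) ∧ ∑ v ∈ s, c v • v = x := by
  classical
  constructor
  · rintro ⟨t, c, hts, hc, rfl⟩
    refine ⟨fun v => if v ∈ t then c v else 0,
      fun v _ => by dsimp only; split_ifs <;> simp [hc v], ?_⟩
    rw [← Finset.sum_subset (Finset.coe_subset.mp hts) fun v _ hv => by simp [hv]]
    exact Finset.sum_congr rfl fun v hv => by simp [hv]
  · rintro ⟨c, hc, rfl⟩
    refine ⟨s, fun v => if v ∈ s then c v else 0, subset_rfl,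
      fun v => by dsimp only; split_ifs with hv <;> simp [hc v, hv], ?_⟩
    exact Finset.sum_congr rfl fun v hv => by simp [hv]

theorem genCone_finset_eq_image (s : Finset (Fin k → ℚ)) :
    genCone (s : Set (Fin k → ℚ)) =
      Fintype.linearCombination ℚ ((↑) : s → Fin k → ℚ) '' {c | 0 ≤ c} := by
  classical
  ext x
  rw [mem_genCone_finset_iff]
  constructor
  · rintro ⟨c, hc, rfl⟩
    refine ⟨fun v => c v, fun v => hc v v.2, ?_⟩
    rw [Fintype.linearCombination_apply]
    exact Finset.sum_coe_sort s fun v => c v • v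
  · rintro ⟨c, hc, rfl⟩
    refine ⟨fun v => if hv : v ∈ s then c ⟨v, hv⟩ else 0,
      fun v hv => by simpa [hv] using hc ⟨v, hv⟩, ?_⟩
    rw [Fintype.linearCombination_apply, ← Finset.sum_coe_sort s]
    simp

theorem isClosed_genCone_of_linearIndepOn {t : Finset (Fin k → ℚ)}
    (ht : LinearIndepOn ℚ id (t : Set (Fin k → ℚ))) :
    IsClosed (genCone (t : Set (Fin k → ℚ))) := by
  rw [genCone_finset_eq_image]
  refine LinearMap.isClosed_image_of_injective _ ?_ (isClosed_le continuous_const continuous_id)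
  rw [← LinearMap.ker_eq_bot, LinearMap.ker_eq_bot']
  exact fun c hc => funext (Fintype.linearIndependent_iff.mp ht c hc)

theorem exists_mem_genCone_erase_of_not_linearIndepOn {t : Finset (Fin k → ℚ)}
    (ht : ¬LinearIndepOn ℚ id (t : Set (Fin k → ℚ))) {x : Fin k → ℚ}
    (hx : x ∈ genCone (t : Set (Fin k → ℚ))) :
    ∃ u ∈ t, x ∈ genCone (t.erase u : Set (Fin k → ℚ)) := by
  classical
  obtain ⟨c, hc, rfl⟩ := mem_genCone_finset_iff.mp hx
  obtain ⟨g, hg, hpos⟩ : ∃ g : (Fin k → ℚ) → ℚ, ∑ v ∈ t, g v • v = 0 ∧ ∃ v ∈ t, 0 < g v := by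
    obtain ⟨g, hg, v, hv, hgv⟩ := not_linearIndepOn_finset_iff.mp ht
    rcases hgv.lt_or_gt with hneg | hpos
    · exact ⟨-g, by simpa [Finset.sum_neg_distrib] using hg, v, hv, by simpa using hneg⟩
    · exact ⟨g, hg, v, hv, hpos⟩
  -- Subtract `r • g` with `r` as large as keeps all coefficients nonnegative; the one at `u` dies.
  obtain ⟨u, hu, hmin⟩ := (t.filter (0 < g ·)).exists_min_image (fun v => c v / g v)
    (Finset.filter_nonempty_iff.mpr hpos)
  rw [Finset.mem_filter] at hu
  set r := c u / g u
  have hr : 0 ≤ r := div_nonneg (hc u hu.1) hu.2.le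
  refine ⟨u, hu.1, mem_genCone_finset_iff.mpr ⟨fun v => c v - r * g v, fun v hv => ?_, ?_⟩⟩
  · have hvt := Finset.mem_of_mem_erase hv
    rcases le_or_gt (g v) 0 with hgv | hgv
    · nlinarith [hc v hvt]
    · have := hmin v (Finset.mem_filter.mpr ⟨hvt, hgv⟩)
      rw [le_div_iff₀ hgv] at this
      linarith
  · rw [Finset.sum_erase t (by simp [r, hu.2.ne'])]
    simp only [sub_smul, mul_smul, Finset.sum_sub_distrib, ← Finset.smul_sum, hg, smul_zero,
      sub_zero]

theorem exists_linearIndepOn_of_mem_genCone {s : Finset (Fin k → ℚ)} {x : Fin k → ℚ}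
    (hx : x ∈ genCone (s : Set (Fin k → ℚ))) :
    ∃ t ⊆ s, LinearIndepOn ℚ id (t : Set (Fin k → ℚ)) ∧ x ∈ genCone (t : Set (Fin k → ℚ)) := by
  classical
  obtain ⟨t, ht, hmin⟩ := (s.powerset.filter fun t : Finset (Fin k → ℚ) =>
    x ∈ genCone (t : Set (Fin k → ℚ))).exists_min_image Finset.card ⟨s, by simpa using hx⟩
  rw [Finset.mem_filter, Finset.mem_powerset] at ht
  refine ⟨t, ht.1, by_contra fun hli => ?_, ht.2⟩
  obtain ⟨u, hu, hxu⟩ := exists_mem_genCone_erase_of_not_linearIndepOn hli ht.2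
  have hcard := hmin (t.erase u) (by
    rw [Finset.mem_filter, Finset.mem_powerset]
    exact ⟨(Finset.erase_subset u t).trans ht.1, hxu⟩)
  exact (Finset.card_erase_lt_of_mem hu).not_ge hcard

theorem isClosed_genCone (s : Finset (Fin k → ℚ)) : IsClosed (genCone (s : Set (Fin k → ℚ))) := by
  classical
  have hunion : genCone (s : Set (Fin k → ℚ)) =
      ⋃ t ∈ s.powerset.filter fun t : Finset (Fin k → ℚ) =>
          LinearIndepOn ℚ id (t : Set (Fin k → ℚ)), genCone (t : Set (Fin k → ℚ)) := by
    ext x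
    simp only [Set.mem_iUnion, Finset.mem_filter, Finset.mem_powerset, exists_prop]
    constructor
    · intro hx
      obtain ⟨t, hts, hli, hxt⟩ := exists_linearIndepOn_of_mem_genCone hx
      exact ⟨t, ⟨hts, hli⟩, hxt⟩
    · rintro ⟨t, ⟨hts, -⟩, hxt⟩
      exact genCone_mono (Finset.coe_subset.mpr hts) hxt
  rw [hunion]
  exact isClosed_biUnion_finset fun t ht =>
    isClosed_genCone_of_linearIndepOn (Finset.mem_filter.mp ht).2

theorem IsPolyhedral.isClosed {σ : Set (Fin k → ℚ)} (hσ : IsPolyhedral σ) : IsClosed σ := by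
  obtain ⟨s, rfl⟩ := hσ
  exact isClosed_genCone s

-- `x` lies in the algebraic relative interior (intrinsic core) of `C`.
def IsRelCorePoint (C : Set (Fin k → ℚ)) (x : Fin k → ℚ) : Prop :=
  ∀ y ∈ C, ∃ ε : ℚ, 0 < ε ∧ x - ε • y ∈ C

theorem isRelCorePoint_sum_genCone (s : Finset (Fin k → ℚ)) :
    IsRelCorePoint (genCone (s : Set (Fin k → ℚ))) (∑ v ∈ s, v) := by
  intro y hy
  obtain ⟨c, hc, rfl⟩ := mem_genCone_finset_iff.mp hy
  set M := ∑ v ∈ s, c v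
  have hM : 0 ≤ M := Finset.sum_nonneg hc
  refine ⟨(1 + M)⁻¹, by positivity, mem_genCone_finset_iff.mpr
    ⟨fun v => 1 - (1 + M)⁻¹ * c v, fun v hv => ?_, ?_⟩⟩
  · have hcv : c v ≤ M := Finset.single_le_sum hc hv
    rw [sub_nonneg, inv_mul_le_one₀ (by positivity)]
    linarith
  · simp only [sub_smul, one_smul, mul_smul, Finset.sum_sub_distrib, ← Finset.smul_sum]

theorem IsRelCorePoint.add_smul {C : Set (Fin k → ℚ)} (hC : IsCone C) {x₀ x₁ : Fin k → ℚ}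
    (hx₀ : IsRelCorePoint C x₀) (hx₁ : x₁ ∈ C) {δ : ℚ} (hδ : 0 < δ) :
    IsRelCorePoint C (x₁ + δ • x₀) := by
  intro y hy
  obtain ⟨ε, hε, hx₀y⟩ := hx₀ y hy
  refine ⟨δ * ε, mul_pos hδ hε, ?_⟩
  have hrw : x₁ + δ • x₀ - (δ * ε) • y = x₁ + δ • (x₀ - ε • y) := by
    rw [smul_sub, mul_smul, add_sub_assoc]
  rw [hrw]
  exact hC.2.1 _ hx₁ _ (hC.2.2 δ hδ.le _ hx₀y)

theorem exists_isRelCorePoint_mem_interior {τ S : Set (Fin k → ℚ)} (hτ : IsCone τ)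
    (hτpoly : IsPolyhedral τ) {x₁ : Fin k → ℚ} (hx₁τ : x₁ ∈ τ) (hx₁S : x₁ ∈ interior S) :
    ∃ x ∈ τ, x ∈ interior S ∧ IsRelCorePoint τ x := by
  obtain ⟨s, rfl⟩ := hτpoly
  set x₀ := ∑ v ∈ s, v
  have hx₀ : x₀ ∈ genCone (s : Set (Fin k → ℚ)) :=
    mem_genCone_finset_iff.mpr ⟨fun _ => 1, fun _ _ => zero_le_one, by simp [x₀]⟩
  obtain ⟨δ, hδS, hδ⟩ :=
    (((tendsto_add_smul_nhdsGT x₁ x₀).eventually (isOpen_interior.mem_nhds hx₁S)).and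
      self_mem_nhdsWithin).exists
  exact ⟨x₁ + δ • x₀, hτ.2.1 _ hx₁τ _ (hτ.2.2 δ (le_of_lt hδ) _ hx₀), hδS,
    (isRelCorePoint_sum_genCone s).add_smul hτ hx₁τ hδ⟩

theorem subset_of_isRelCorePoint {C m : Set (Fin k → ℚ)} (hC : IsCone C) (hm : IsCone m)
    (hface : IsFaceOf (m ∩ C) C) {x : Fin k → ℚ} (hx : IsRelCorePoint C x) (hxC : x ∈ C)
    (hxm : x ∈ m) : C ⊆ m := by
  intro y hy
  obtain ⟨ε, hε, hxy⟩ := hx y hy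
  have hεy : ε • y ∈ m ∩ C :=
    (hface.2 _ hxy _ (hC.2.2 ε hε.le y hy) (by rw [sub_add_cancel]; exact ⟨hxm, hxC⟩)).2
  simpa [smul_smul, inv_mul_cancel₀ hε.ne'] using hm.2.2 ε⁻¹ (by positivity) _ hεy.1

theorem mem_of_isFaceOf_of_add_smul_sub_mem {τ m : Set (Fin k → ℚ)} (hface : IsFaceOf τ m)
    (hτ : IsCone τ) (hm : IsCone m) {x z : Fin k → ℚ} (hxτ : x ∈ τ) (hzm : z ∈ m) {t : ℚ}
    (ht : 0 < t) (hray : x + t • (x - z) ∈ m) : z ∈ τ := by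
  have hsum : x + t • (x - z) + t • z = (1 + t) • x := by
    rw [smul_sub, add_smul, one_smul]
    abel
  have htz : t • z ∈ τ := (hface.2 _ hray _ (hm.2.2 t ht.le z hzm)
    (by rw [hsum]; exact hτ.2.2 _ (by positivity) x hxτ)).2
  simpa [smul_smul, inv_mul_cancel₀ ht.ne'] using hτ.2.2 t⁻¹ (by positivity) _ htz

end Cone

theorem gitfan_stmt0_general {k : ℕ} (F : Set (Set (Fin k → ℚ))) (hF : IsFan F)
    (hpure : ∀ σ ∈ F, (∀ σ' ∈ F, σ ⊆ σ' → σ' = σ) → coneDim σ = k)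
    (τ : Set (Fin k → ℚ)) (hτ : τ ∈ F)
    (hint : (τ ∩ interior (⋃₀ F)).Nonempty) :
    τ = ⋂₀ {σ | σ ∈ F ∧ coneDim σ = k ∧ IsFaceOf τ σ} := by
  obtain ⟨x₁, hx₁τ, hx₁int⟩ := hint
  obtain ⟨hτcone, hτpoly⟩ := hF.cone τ hτ
  obtain ⟨x, hxτ, hxint, hxcore⟩ :=
    exists_isRelCorePoint_mem_interior hτcone hτpoly hx₁τ hx₁int
  refine Set.Subset.antisymm (Set.subset_sInter fun σ hσ => hσ.2.2.1) fun z hz => ?_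
  obtain ⟨σ, hσF, hxσ, t, ht, hrayσ⟩ := exists_mem_add_smul_mem_of_mem_interior_sUnion hF.finite
    (fun σ hσ => (hF.cone σ hσ).2.isClosed) hxint (x - z)
  obtain ⟨m, hmF, hσm, hmmax⟩ := hF.finite.exists_maximal_mem_superset hσF
  have hmcone := (hF.cone m hmF).1
  have hτm : τ ⊆ m := subset_of_isRelCorePoint hτcone hmcone (hF.inter m hmF τ hτ).2 hxcore hxτ
    (hσm hxσ)
  have hface : IsFaceOf τ m := by
    simpa [Set.inter_eq_right.mpr hτm] using (hF.inter m hmF τ hτ).1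
  exact mem_of_isFaceOf_of_add_smul_sub_mem hface hτcone hmcone hxτ
    (hz m ⟨hmF, hpure m hmF hmmax, hface⟩) ht (hσm hrayσ)

/-- Let `Σ` be a fan in `ℚ^k` all of whose maximal cones are
`k`-dimensional, with convex support. If `τ ∈ Σ` meets the topological
interior of the support, then `τ` is the intersection of all `k`-dimensional
cones of `Σ` having `τ` as a face. -/
theorem gitfan_stmt0 {k : ℕ} (F : Set (Set (Fin k → ℚ))) (hF : IsFan F)
    (hpure : ∀ σ ∈ F, (∀ σ' ∈ F, σ ⊆ σ' → σ' = σ) → coneDim σ = k)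
    (hconv : Convex ℚ (⋃₀ F)) (τ : Set (Fin k → ℚ)) (hτ : τ ∈ F)
    (hint : (τ ∩ interior (⋃₀ F)).Nonempty) :
    τ = ⋂₀ {σ | σ ∈ F ∧ coneDim σ = k ∧ IsFaceOf τ σ} :=
  gitfan_stmt0_general F hF hpure τ hτ hint
end

section
/- Let Q: Z^r → Z^k be a linear map given by an integer matrix with columns q_1,...,q_r, let a ⊆ K[T_1,...,T_r] be a monomial-free ideal homogeneous with respect to the Z^k-grading deg(T_i) = q_i, and assume Q(γ) is k-dimensional where γ = Q_{≥0}^r. If γ_0 ⪯ γ is an a-face and θ_0 ⪯ Q(γ_0) is a face of the projected cone, then θ_0 is again a projected a-face, i.e. there exists an a-face γ_1 ⪯ γ with Q(γ_1) = θ_0. -/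
/-- `S` (a face of the orthant) is an `a`-face. -/
def IsAFace {K : Type*} [Field K] {r : ℕ} (a : Ideal (MvPolynomial (Fin r) K))
    (S : Set (Fin r)) : Prop :=
  ∃ x : Fin r → K, (∀ i, x i ≠ 0 ↔ i ∈ S) ∧ ∀ f ∈ a, MvPolynomial.eval x f = 0

/-! Let `S₁ = {i ∈ S | q_i ∈ θ₀}`. As `θ₀` is a face of `cone(q_i : i ∈ S)`, a monomial `T^m`
supported in `S` has its degree `∑ m_i q_i` in `θ₀` iff it is supported in `S₁`. Take `x ∈ V(a)`
with support `S` and set its coordinates outside `S₁` to zero. For `f ∈ a`, this leaves every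
homogeneous component `f_d` with `d ∈ θ₀` unchanged and annihilates all the others, so the new
point still lies in `V(a)` and `S₁` is an `a`-face. Finally `θ₀` is generated by the `q_i` it
contains. -/

section Cones

variable {k : ℕ}

lemma IsCone.sum_mem {σ : Set (Fin k → ℚ)} (hσ : IsCone σ) {ι : Type*} (t : Finset ι)
    {g : ι → Fin k → ℚ} (hg : ∀ i ∈ t, g i ∈ σ) : ∑ i ∈ t, g i ∈ σ :=
  Finset.sum_induction g (· ∈ σ) (fun x y hx hy => hσ.2.1 x hx y hy) hσ.1 hg

lemma subset_genCone (s : Set (Fin k → ℚ)) : s ⊆ genCone s := fun v hv =>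
  ⟨{v}, fun _ => 1, by simpa using hv, fun _ => zero_le_one, by simp⟩

lemma genCone_subset {s σ : Set (Fin k → ℚ)} (hσ : IsCone σ) (hs : s ⊆ σ) :
    genCone s ⊆ σ := by
  rintro _ ⟨t, c, ht, hc, rfl⟩
  exact hσ.sum_mem t fun v hv => hσ.2.2 (c v) (hc v) v (hs (ht hv))

lemma isCone_genCone (s : Set (Fin k → ℚ)) : IsCone (genCone s) := by
  classical
  refine ⟨⟨∅, 0, by simp, fun _ => le_rfl, by simp⟩, ?_, ?_⟩
  · rintro _ ⟨t₁, c₁, ht₁, hc₁, rfl⟩ _ ⟨t₂, c₂, ht₂, hc₂, rfl⟩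
    have hextend : ∀ {t : Finset (Fin k → ℚ)} {c : (Fin k → ℚ) → ℚ}, t ⊆ t₁ ∪ t₂ →
        ∑ v ∈ t, c v • v = ∑ v ∈ t₁ ∪ t₂, (t : Set _).indicator c v • v := fun {t c} h => by
      rw [← Finset.sum_subset h fun v _ hv => by
        rw [Set.indicator_of_notMem (Finset.mem_coe.not.2 hv), zero_smul]]
      exact Finset.sum_congr rfl fun v hv => by rw [Set.indicator_of_mem (Finset.mem_coe.2 hv)]
    refine ⟨t₁ ∪ t₂, fun v => (t₁ : Set _).indicator c₁ v + (t₂ : Set _).indicator c₂ v,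
      by simpa using ⟨ht₁, ht₂⟩, fun v => add_nonneg (Set.indicator_nonneg (fun v _ => hc₁ v) v)
        (Set.indicator_nonneg (fun v _ => hc₂ v) v), ?_⟩
    rw [hextend Finset.subset_union_left, hextend Finset.subset_union_right,
      ← Finset.sum_add_distrib]
    simp only [add_smul]
  · rintro c hc _ ⟨t, c', ht, hc', rfl⟩
    refine ⟨t, c • c', ht, fun v => mul_nonneg hc (hc' v), ?_⟩
    simp only [Finset.smul_sum, smul_smul, Pi.smul_apply, smul_eq_mul]

variable {τ σ : Set (Fin k → ℚ)}

lemma IsFaceOf.mem_of_sum_mem (hface : IsFaceOf τ σ) (hσ : IsCone σ) {ι : Type*}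
    (t : Finset ι) {g : ι → Fin k → ℚ} (hg : ∀ i ∈ t, g i ∈ σ) (hsum : ∑ i ∈ t, g i ∈ τ) :
    ∀ i ∈ t, g i ∈ τ := by
  classical
  induction t using Finset.induction with
  | empty => simp
  | insert j t hj ih =>
    rw [Finset.sum_insert hj] at hsum
    rw [Finset.forall_mem_insert] at hg ⊢
    have hsplit := hface.2 _ hg.1 _ (hσ.sum_mem t hg.2) hsum
    exact ⟨hsplit.1, ih hg.2 hsplit.2⟩

lemma IsFaceOf.sum_smul_mem_iff (hface : IsFaceOf τ σ) (hσ : IsCone σ) (hτ : IsCone τ)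
    {ι : Type*} (t : Finset ι) {c : ι → ℚ} {v : ι → Fin k → ℚ} (hc : ∀ i ∈ t, 0 < c i)
    (hv : ∀ i ∈ t, v i ∈ σ) : ∑ i ∈ t, c i • v i ∈ τ ↔ ∀ i ∈ t, v i ∈ τ := by
  refine ⟨fun hsum i hi => ?_,
    fun hτv => hτ.sum_mem t fun i hi => hτ.2.2 _ (hc i hi).le _ (hτv i hi)⟩
  have hcv : c i • v i ∈ τ := hface.mem_of_sum_mem hσ t
    (fun j hj => hσ.2.2 _ (hc j hj).le _ (hv j hj)) hsum i hi
  simpa [smul_smul, inv_mul_cancel₀ (hc i hi).ne'] using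
    hτ.2.2 _ (inv_nonneg.2 (hc i hi).le) _ hcv

lemma IsFaceOf.genCone_inter_eq {s : Set (Fin k → ℚ)} (hface : IsFaceOf τ (genCone s))
    (hτ : IsCone τ) : genCone (s ∩ τ) = τ := by
  classical
  refine (genCone_subset hτ Set.inter_subset_right).antisymm fun z hz => ?_
  obtain ⟨t, c, ht, hc, rfl⟩ := hface.1 hz
  set t' := t.filter (0 < c ·)
  have hsum : ∑ v ∈ t, c v • v = ∑ v ∈ t', c v • v := (Finset.sum_filter_of_ne
    fun v _ hv => lt_of_le_of_ne (hc v) fun h => hv (by rw [← h, zero_smul])).symm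
  have ht' : ∀ v ∈ t', v ∈ s := fun v hv => ht (Finset.mem_filter.1 hv).1
  rw [hsum] at hz ⊢
  have hτv := (hface.sum_smul_mem_iff (isCone_genCone s) hτ t'
    (fun v hv => (Finset.mem_filter.1 hv).2) fun v hv => subset_genCone s (ht' v hv)).1 hz
  exact ⟨t', c, fun v hv => ⟨ht' v hv, hτv v hv⟩, hc, rfl⟩

end Cones

namespace MvPolynomial

variable {σ R : Type*} [CommSemiring R] (x : σ → R) (T : Set σ) {p : MvPolynomial σ R}

lemma eval_indicator_of_forall_support_subset
    (h : ∀ m ∈ p.support, (∀ i ∈ m.support, x i ≠ 0) → ↑m.support ⊆ T) :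
    eval (T.indicator x) p = eval x p := by
  simp only [eval_eq]
  refine Finset.sum_congr rfl fun m hm => congrArg _ ?_
  by_cases hT : ↑m.support ⊆ T
  · exact Finset.prod_congr rfl fun i hi => by rw [Set.indicator_of_mem (hT hi)]
  · obtain ⟨i, hi, hiT⟩ := Set.not_subset.1 hT
    obtain ⟨j, hj, hxj⟩ : ∃ j ∈ m.support, x j = 0 := by
      by_contra! hx
      exact hT (h m hm hx)
    rw [Finset.prod_eq_zero hi (by
        rw [Set.indicator_of_notMem hiT, zero_pow (Finsupp.mem_support_iff.1 hi)]),
      Finset.prod_eq_zero hj (by rw [hxj, zero_pow (Finsupp.mem_support_iff.1 hj)])]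

lemma eval_indicator_eq_zero_of_forall_not_support_subset
    (h : ∀ m ∈ p.support, (∀ i ∈ m.support, x i ≠ 0) → ¬ ↑m.support ⊆ T) :
    eval (T.indicator x) p = 0 := by
  simp only [eval_eq]
  refine Finset.sum_eq_zero fun m hm => mul_eq_zero_of_right _ ?_
  by_cases hx : ∀ i ∈ m.support, x i ≠ 0
  · obtain ⟨i, hi, hiT⟩ := Set.not_subset.1 (h m hm hx)
    exact Finset.prod_eq_zero hi (by
      rw [Set.indicator_of_notMem hiT, zero_pow (Finsupp.mem_support_iff.1 hi)])
  · obtain ⟨i, hi, hxi⟩ : ∃ i ∈ m.support, x i = 0 := by simpa using hx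
    exact Finset.prod_eq_zero hi (by
      rw [Set.indicator_apply_eq_zero.2 fun _ => hxi, zero_pow (Finsupp.mem_support_iff.1 hi)])

end MvPolynomial

lemma IsAFace.of_subset_of_weight_mem_iff {K M : Type*} [Field K] [AddCommMonoid M] {r : ℕ}
    {a : Ideal (MvPolynomial (Fin r) K)} {q : Fin r → M}
    (hhom : ∀ f ∈ a, ∀ d : M, MvPolynomial.weightedHomogeneousComponent q d f ∈ a)
    {S T : Set (Fin r)} (hS : IsAFace a S) (hTS : T ⊆ S) (D : Set M)
    (hD : ∀ m : Fin r →₀ ℕ, ↑m.support ⊆ S → (↑m.support ⊆ T ↔ Finsupp.weight q m ∈ D)) :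
    IsAFace a T := by
  obtain ⟨x, hx, hxa⟩ := hS
  refine ⟨T.indicator x, fun i => ?_, fun f hf => ?_⟩
  · rw [Set.indicator_apply_ne_zero, Set.mem_inter_iff, Function.mem_support, hx]
    exact ⟨fun h => h.1, fun h => ⟨h, hTS h⟩⟩
  have hsupp : ∀ d, ∀ m ∈ (MvPolynomial.weightedHomogeneousComponent q d f).support,
      (∀ i ∈ m.support, x i ≠ 0) → (↑m.support ⊆ T ↔ d ∈ D) := fun d m hm hxm => by
    rw [← MvPolynomial.weightedHomogeneousComponent_isWeightedHomogeneous d f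
      (MvPolynomial.mem_support_iff.1 hm)]
    exact hD m fun i hi => (hx i).1 (hxm i hi)
  rw [← MvPolynomial.sum_weightedHomogeneousComponent q f,
    map_finsum _ (MvPolynomial.weightedHomogeneousComponent_finsupp f)]
  refine finsum_eq_zero_of_forall_eq_zero fun d => ?_
  by_cases hd : d ∈ D
  · rw [MvPolynomial.eval_indicator_of_forall_support_subset x T
      fun m hm hxm => (hsupp d m hm hxm).2 hd]
    exact hxa _ (hhom f hf d)
  · exact MvPolynomial.eval_indicator_eq_zero_of_forall_not_support_subset x T
      fun m hm hxm => mt (hsupp d m hm hxm).1 hd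

lemma intCast_weight {ι : Type*} {r : ℕ} (q : Fin r → ι → ℤ) (m : Fin r →₀ ℕ) :
    (fun j => (Finsupp.weight q m j : ℚ)) =
      ∑ i ∈ m.support, (m i : ℚ) • fun j => (q i j : ℚ) := by
  ext j
  simp [Finsupp.weight_apply, Finsupp.sum, Finset.sum_apply]

theorem gitfan_stmt7_general {K : Type*} [Field K] {r k : ℕ}
    (q : Fin r → Fin k → ℤ) (a : Ideal (MvPolynomial (Fin r) K))
    (hhom : ∀ f ∈ a, ∀ d : Fin k → ℤ,
      MvPolynomial.weightedHomogeneousComponent q d f ∈ a)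
    (S : Set (Fin r)) (hS : IsAFace a S)
    (θ0 : Set (Fin k → ℚ)) (hθ0 : IsCone θ0)
    (hface : IsFaceOf θ0 (genCone ((fun i j => (q i j : ℚ)) '' S))) :
    ∃ S1 : Set (Fin r), IsAFace a S1 ∧ genCone ((fun i j => (q i j : ℚ)) '' S1) = θ0 := by
  set v : Fin r → Fin k → ℚ := fun i j => (q i j : ℚ)
  refine ⟨S ∩ v ⁻¹' θ0, hS.of_subset_of_weight_mem_iff hhom Set.inter_subset_left
    {d | (fun j => (d j : ℚ)) ∈ θ0} fun m hm => ?_, ?_⟩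
  · have hm_pos : ∀ i ∈ m.support, (0 : ℚ) < m i := fun i hi => by
      exact_mod_cast Nat.pos_of_ne_zero (Finsupp.mem_support_iff.1 hi)
    rw [Set.mem_ofPred_eq, intCast_weight, hface.sum_smul_mem_iff (isCone_genCone _) hθ0
      m.support hm_pos fun i hi => subset_genCone _ ⟨i, hm hi, rfl⟩]
    exact ⟨fun h i hi => (h hi).2, fun h i hi => ⟨hm hi, h i hi⟩⟩
  · rw [Set.image_inter_preimage]
    exact hface.genCone_inter_eq hθ0

/-- Let `a` be a monomial-free ideal, homogeneous for the
`ℤ^k`-grading `deg T_i = q_i`, with `Q(γ)` of full dimension `k`.  If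
`γ₀ = cone(e_i : i ∈ S)` is an `a`-face and `θ₀` is a face of the projected
cone `Q(γ₀) = cone(q_i : i ∈ S)`, then `θ₀` is again a projected `a`-face:
there is an `a`-face `γ₁` with `Q(γ₁) = θ₀`. -/
theorem gitfan_stmt7 {K : Type*} [Field K] [IsAlgClosed K] [CharZero K] {r k : ℕ}
    (q : Fin r → Fin k → ℤ) (a : Ideal (MvPolynomial (Fin r) K))
    (hmf : ∀ m : Fin r →₀ ℕ, MvPolynomial.monomial m (1 : K) ∉ a)
    (hhom : ∀ f ∈ a, ∀ d : Fin k → ℤ,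
      MvPolynomial.weightedHomogeneousComponent q d f ∈ a)
    (hdim : coneDim (genCone (Set.range fun i j => (q i j : ℚ))) = k)
    (S : Set (Fin r)) (hS : IsAFace a S)
    (θ0 : Set (Fin k → ℚ)) (hθ0 : IsCone θ0)
    (hface : IsFaceOf θ0 (genCone ((fun i j => (q i j : ℚ)) '' S))) :
    ∃ S1 : Set (Fin r), IsAFace a S1 ∧ genCone ((fun i j => (q i j : ℚ)) '' S1) = θ0 :=
  gitfan_stmt7_general q a hhom S hS θ0 hθ0 hface
end

section
/- Let γ_0 be a face of γ = Q_{≥0}^r, let a ⊆ K[T_1,...,T_r] be an ideal, and let H(γ_0) ⊆ T^r_{γ_0} be the maximal subgroup of the torus T^r_{γ_0} leaving V(T^r_{γ_0}; a_{γ_0}) invariant, with quotient π: T^r_{γ_0} → T^r_{γ_0}/H(γ_0). Then V(T^r_{γ_0}; a) ≠ ∅ if and only if V(T^r_{γ_0}/H(γ_0); π_* a_{γ_0}) ≠ ∅. -/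
/-- The point of `K^r` in the torus orbit `T^r_{γ₀}` corresponding to a point
`t` of the torus `(K^*)^S`, where `S` is the set of indices `i` with
`e_i ∈ γ₀`: coordinate `i ∈ S` is `t_i`, the others are `0`. -/
def embS {K : Type*} [Field K] {r : ℕ} (S : Finset (Fin r))
    (t : {i // i ∈ S} → Kˣ) : Fin r → K :=
  fun i => if h : i ∈ S then (t ⟨i, h⟩ : K) else 0

/-- `V(T^r_{γ₀}; a_{γ₀})`, written in the torus coordinates of the orbit
`T^r_{γ₀} ≅ (K^*)^S` (on the orbit, `a` and `a_{γ₀}` have the same zeros). -/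
def VT {K : Type*} [Field K] {r : ℕ} (a : Ideal (MvPolynomial (Fin r) K))
    (S : Finset (Fin r)) : Set ({i // i ∈ S} → Kˣ) :=
  {t | ∀ f ∈ a, MvPolynomial.eval (embS S t) f = 0}

/-- `H(γ₀)`: the maximal subgroup of the torus `T^r_{γ₀} ≅ (K^*)^S` whose
translation action leaves `V(T^r_{γ₀}; a_{γ₀})` invariant. -/
def HS {K : Type*} [Field K] {r : ℕ} (a : Ideal (MvPolynomial (Fin r) K))
    (S : Finset (Fin r)) : Subgroup ({i // i ∈ S} → Kˣ) where
  carrier := {h | ∀ t, h * t ∈ VT a S ↔ t ∈ VT a S}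
  one_mem' := by intro t; rw [one_mul]
  mul_mem' := by
    intro g h hg hh t
    rw [mul_assoc]
    exact (hg _).trans (hh t)
  inv_mem' := by
    intro h hh t
    simpa [mul_inv_cancel_left] using (hh (h⁻¹ * t)).symm

/-- The push forwards `π_* g`, for `g ∈ a_{γ₀}`, under the quotient map
`π : T^r_{γ₀} → T^r_{γ₀}/H(γ₀)`: functions `h` on the quotient torus with
`π^* h = T^μ g` for some Laurent monomial `T^μ`.  Here
`a_{γ₀} = ⟨ f_{γ₀} : f ∈ a ⟩` with `f_{γ₀}` obtained by setting the variables
`T_i`, `i ∉ S`, to zero. -/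
def pushforwards {K : Type*} [Field K] {r : ℕ} (a : Ideal (MvPolynomial (Fin r) K))
    (S : Finset (Fin r)) : Set ((({i // i ∈ S} → Kˣ) ⧸ HS a S) → K) :=
  {h | ∃ g ∈ a.map (MvPolynomial.aeval fun i : Fin r =>
        if i ∈ S then MvPolynomial.X i else (0 : MvPolynomial (Fin r) K)).toRingHom,
    ∃ μ : {i // i ∈ S} → ℤ, ∀ t : {i // i ∈ S} → Kˣ,
      h (QuotientGroup.mk t) =
        ((∏ i, t i ^ μ i : Kˣ) : K) * MvPolynomial.eval (embS S t) g}

/-! A point `t` of `V(T^r_{γ₀}; a)` makes every push forward vanish at `π t`, because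
`π^* h = T^μ g` with `g ∈ a_{γ₀}`. Conversely, if `V(T^r_{γ₀}; a)` is empty, then the monomial `∏_{i ∈ γ₀} T_i` vanishes on the zero set of `a_{γ₀}` in `K^r`, so by the
Nullstellensatz some power `(∏ T_i)^n` lies in `a_{γ₀}`; its push forward with `μ = -n` is the
constant function `1`, hence `π_* a_{γ₀}` is the unit ideal. -/

open MvPolynomial

section

variable {K : Type*} [Field K] {r : ℕ}

theorem eval_aeval_ite_X {σ : Type*} [DecidableEq σ] (S : Finset σ) (x : σ → K)
    (f : MvPolynomial σ K) :
    eval x (aeval (fun i => if i ∈ S then X i else (0 : MvPolynomial σ K)) f) =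
      eval (fun i => if i ∈ S then x i else 0) f := by
  rw [aeval_eq_bind₁, eval, eval₂Hom_bind₁, eval]
  congr 2 with i
  split_ifs <;> simp

theorem ite_embS (S : Finset (Fin r)) (t : {i // i ∈ S} → Kˣ) :
    (fun i => if i ∈ S then embS S t i else 0) = embS S t := by
  funext i
  split_ifs with h <;> simp [embS, h]

theorem range_embS (S : Finset (Fin r)) :
    Set.range (embS (K := K) S) = {x | ∀ i, x i ≠ 0 ↔ i ∈ S} := by
  ext x
  constructor
  · rintro ⟨t, rfl⟩ i
    by_cases h : i ∈ S <;> simp [embS, h]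
  · intro hx
    refine ⟨fun j => Units.mk0 (x j) ((hx j).mpr j.2), funext fun i => ?_⟩
    by_cases h : i ∈ S
    · simp [embS, h]
    · simpa [embS, h, eq_comm] using mt (hx i).mp h

variable {a : Ideal (MvPolynomial (Fin r) K)} {S : Finset (Fin r)}

theorem exists_orbit_zero_iff_nonempty_VT :
    (∃ x : Fin r → K, (∀ i, x i ≠ 0 ↔ i ∈ S) ∧ ∀ f ∈ a, eval x f = 0) ↔ (VT a S).Nonempty := by
  have horbit (x : Fin r → K) : (∀ i, x i ≠ 0 ↔ i ∈ S) ↔ x ∈ Set.range (embS S) := by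
    rw [range_embS]; rfl
  simp only [horbit, Set.exists_range_iff]
  rfl

theorem eval_embS_eq_zero_of_mem_map {t : {i // i ∈ S} → Kˣ} (ht : t ∈ VT a S)
    {g : MvPolynomial (Fin r) K}
    (hg : g ∈ a.map (aeval fun i => if i ∈ S then X i else (0 : MvPolynomial (Fin r) K)).toRingHom) :
    eval (embS S t) g = 0 := by
  refine (Ideal.map_le_iff_le_comap.mpr fun f hf => ?_ : _ ≤ RingHom.ker (eval (embS S t))) hg
  rw [Ideal.mem_comap, RingHom.mem_ker, AlgHom.toRingHom_eq_coe, RingHom.coe_coe,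
    eval_aeval_ite_X, ite_embS]
  exact ht f hf

theorem span_pushforwards_apply_mk_eq_zero {t : {i // i ∈ S} → Kˣ} (ht : t ∈ VT a S)
    {h : (({i // i ∈ S} → Kˣ) ⧸ HS a S) → K} (hh : h ∈ Ideal.span (pushforwards a S)) :
    h (QuotientGroup.mk t) = 0 := by
  refine (Ideal.span_le.mpr ?_ : _ ≤ RingHom.ker (Pi.evalRingHom _ (QuotientGroup.mk t))) hh
  rintro g ⟨p, hp, μ, hμ⟩
  simp [hμ t, eval_embS_eq_zero_of_mem_map ht hp]

theorem exists_pow_prod_X_mem_map_of_VT_eq_empty [IsAlgClosed K] (hV : VT a S = ∅) :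
    ∃ n : ℕ, (∏ i ∈ S, X i) ^ n ∈
      a.map (aeval fun i => if i ∈ S then X i else (0 : MvPolynomial (Fin r) K)).toRingHom := by
  rw [← Ideal.mem_radical_iff, ← vanishingIdeal_zeroLocus_eq_radical (K := K)]
  intro x hx
  simp only [map_prod, aeval_X]
  by_contra hx0
  have hxS : ∀ i ∈ S, x i ≠ 0 := by simpa [Finset.prod_eq_zero_iff] using hx0
  let t : {i // i ∈ S} → Kˣ := fun j => Units.mk0 (x j) (hxS j j.2)
  have hembS : embS S t = fun i => if i ∈ S then x i else 0 := by
    funext i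
    by_cases h : i ∈ S <;> simp [embS, t, h]
  refine hV.subset (fun f hf => ?_ : t ∈ VT a S)
  rw [hembS, ← eval_aeval_ite_X]
  exact hx _ (Ideal.mem_map_of_mem _ hf)

theorem one_mem_pushforwards_of_pow_prod_X_mem {n : ℕ}
    (hn : (∏ i ∈ S, X i) ^ n ∈
      a.map (aeval fun i => if i ∈ S then X i else (0 : MvPolynomial (Fin r) K)).toRingHom) :
    1 ∈ pushforwards a S := by
  refine ⟨_, hn, fun _ => -(n : ℤ), fun t => ?_⟩
  have heval : eval (embS S t) ((∏ i ∈ S, X i) ^ n) = ((∏ j, t j : Kˣ) : K) ^ n := by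
    simp [map_prod, ← Finset.prod_coe_sort S, embS]
  rw [Pi.one_apply, heval, Finset.prod_zpow, Units.val_zpow_eq_zpow_val, zpow_neg, zpow_natCast,
    inv_mul_cancel₀ (pow_ne_zero _ (Units.ne_zero _))]

end

theorem gitfan_stmt14_general {K : Type*} [Field K] [IsAlgClosed K] {r : ℕ}
    (a : Ideal (MvPolynomial (Fin r) K)) (S : Finset (Fin r)) :
    (∃ x : Fin r → K, (∀ i, x i ≠ 0 ↔ i ∈ S) ∧ ∀ f ∈ a, MvPolynomial.eval x f = 0)
    ↔ ∃ y : ({i // i ∈ S} → Kˣ) ⧸ HS a S,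
        ∀ h ∈ Ideal.span (pushforwards a S), h y = 0 := by
  rw [exists_orbit_zero_iff_nonempty_VT]
  constructor
  · rintro ⟨t, ht⟩
    exact ⟨QuotientGroup.mk t, fun h hh => span_pushforwards_apply_mk_eq_zero ht hh⟩
  · rintro ⟨y, hy⟩
    by_contra hV
    obtain ⟨n, hn⟩ :=
      exists_pow_prod_X_mem_map_of_VT_eq_empty (Set.not_nonempty_iff_eq_empty.mp hV)
    exact one_ne_zero (hy 1 (Ideal.subset_span (one_mem_pushforwards_of_pow_prod_X_mem hn)))

/-- `V(T^r_{γ₀}; a) ≠ ∅` if and only if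
`V(T^r_{γ₀}/H(γ₀); π_* a_{γ₀}) ≠ ∅`, where `π_* a_{γ₀}` is the ideal
generated by the push forwards of elements of `a_{γ₀}`. -/
theorem gitfan_stmt14 {K : Type*} [Field K] [IsAlgClosed K] [CharZero K] {r : ℕ}
    (a : Ideal (MvPolynomial (Fin r) K)) (S : Finset (Fin r)) :
    (∃ x : Fin r → K, (∀ i, x i ≠ 0 ↔ i ∈ S) ∧ ∀ f ∈ a, MvPolynomial.eval x f = 0)
    ↔ ∃ y : ({i // i ∈ S} → Kˣ) ⧸ HS a S,
        ∀ h ∈ Ideal.span (pushforwards a S), h y = 0 :=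
  gitfan_stmt14_general a S
end
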